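/- arXiv:1509.07374 — 3 statements merged into one kernel-verified Lean document; each statement's English description precedes it below -/
import Mathlib

section
/- Let π ∈ S_L with ‖π‖ = k, and let t₁t₂⋯t_k be a product of transpositions equal to π. Then for every j ∈ {1,...,k}, the two elements swapped by t_j lie in two different cycles of the partial product t₁⋯t_{j−1}, and lie in the same cycle of π. -/
/-- The transposition norm of a permutation: the minimal number of transpositions
whose product equals `σ`. -/
noncomputable def permNorm {α : Type*} [DecidableEq α] (σ : Equiv.Perm α) : ℕ :=
  sInf {k : ℕ | ∃ l : List (Equiv.Perm α),
    l.length = k ∧ (∀ t ∈ l, t.IsSwap) ∧ l.prod = σ}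

/-!
Multiplying a permutation on the right by `swap x y` changes its number of cycles by exactly
one: the cycles of `x` and `y` merge if they are distinct, and their common cycle splits
otherwise. Hence a product of `k` transpositions of `n` points has at least `n - k` cycles, and
a permutation with `c` cycles is a product of `n - c` transpositions, so `‖π‖ = n - c(π)`.
In a factorization of minimal length every factor must therefore merge two cycles, which is
the first claim. For the second, conjugating the factors after `t_j` by `t_j` moves `t_j` to
the end of a minimal factorization of `π`; so `x` and `y` lie in different cycles of `π t_j`,
that is, in the same cycle of `π`.
-/

namespace Equiv.Perm

variable {α : Type*}

theorem SameCycle.mem_of_mapsTo [Finite α] {f : Perm α} {s : Set α} (hs : Set.MapsTo f s s)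
    {u v : α} (h : f.SameCycle u v) (hu : u ∈ s) : v ∈ s := by
  obtain ⟨n, rfl⟩ := h.exists_nat_pow_eq
  clear h
  induction n with
  | zero => simpa
  | succ n ih => rw [pow_succ', mul_apply]; exact hs ih

/-- The number of cycles of `σ`, fixed points included. -/
noncomputable def numCycles (σ : Perm α) : ℕ := Nat.card (Quotient (SameCycle.setoid σ))

theorem numCycles_one : numCycles (1 : Perm α) = Nat.card α :=
  (Nat.card_congr (Equiv.ofBijective _
    ⟨fun _ _ h => sameCycle_one.1 (Quotient.exact h), Quotient.mk_surjective⟩)).symm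

theorem numCycles_le_card [Finite α] (σ : Perm α) : numCycles σ ≤ Nat.card α :=
  Nat.card_le_card_of_surjective _ Quotient.mk_surjective

variable [DecidableEq α]

theorem IsSwap.conj {t : Perm α} (ht : t.IsSwap) (f : Perm α) : (f * t * f⁻¹).IsSwap := by
  obtain ⟨a, b, hab, rfl⟩ := ht
  exact ⟨f a, f b, f.injective.ne hab, (swap_apply_apply f a b).symm⟩

section Finite

variable [Finite α] {σ : Perm α} {x y : α}

theorem sameCycle_mul_swap_of_not_sameCycle (hn : ¬σ.SameCycle x y) :
    (σ * swap x y).SameCycle x y := by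
  by_contra hτ
  -- until it reaches `y`, the `σ * swap x y`-orbit of `x` follows the `σ`-orbit of `σ y`
  let S : Set α := {w | (σ * swap x y).SameCycle x w ∧ σ.SameCycle y w}
  have hS : Set.MapsTo σ S S := by
    rintro w ⟨hxw, hyw⟩
    have hwx : w ≠ x := by rintro rfl; exact hn hyw.symm
    have hwy : w ≠ y := by rintro rfl; exact hτ hxw
    have hτw : (σ * swap x y) w = σ w := by simp [swap_apply_of_ne_of_ne hwx hwy]
    exact ⟨hτw ▸ sameCycle_apply_right.2 hxw, sameCycle_apply_right.2 hyw⟩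
  have hσy : σ y ∈ S := ⟨⟨1, by simp⟩, ⟨1, rfl⟩⟩
  exact hτ (SameCycle.mem_of_mapsTo hS (sameCycle_apply_left.2 SameCycle.rfl) hσy).1

theorem not_sameCycle_mul_swap_of_sameCycle (hxy : x ≠ y) (hs : σ.SameCycle x y) :
    ¬(σ * swap x y).SameCycle x y := by
  have hex : ∃ d, 0 < d ∧ (σ ^ d) y = x := by
    obtain ⟨d, hd, -, h⟩ := hs.symm.exists_pow_eq''
    exact ⟨d, hd, h⟩
  obtain ⟨hd0, hdx⟩ := Nat.find_spec hex
  set d := Nat.find hex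
  have hne_x : ∀ k, 0 < k → k < d → (σ ^ k) y ≠ x := fun k hk hkd h =>
    Nat.find_min hex hkd ⟨hk, h⟩
  have hne_y : ∀ k, 0 < k → k ≤ d → (σ ^ k) y ≠ y := by
    intro k hk hkd h
    have hkd' : k < d := lt_of_le_of_ne hkd (by rintro rfl; exact hxy (hdx ▸ h))
    refine hne_x (d - k) (by omega) (by omega) ?_
    rw [← h, ← mul_apply, ← pow_add, Nat.sub_add_cancel hkd, hdx]
  -- the `σ * swap x y`-orbit of `x` is `σ y, σ² y, …, σ^d y = x`, which misses `y`
  let S : Set α := {w | ∃ k, 0 < k ∧ k ≤ d ∧ (σ ^ k) y = w}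
  have hS : Set.MapsTo (σ * swap x y) S S := by
    rintro _ ⟨k, hk, hkd, rfl⟩
    rcases hkd.lt_or_eq with hkd | rfl
    · refine ⟨k + 1, by omega, hkd, ?_⟩
      rw [mul_apply, swap_apply_of_ne_of_ne (hne_x k hk hkd) (hne_y k hk hkd.le), pow_succ',
        mul_apply]
    · exact ⟨1, one_pos, hd0, by simp [hdx]⟩
  intro h
  obtain ⟨k, hk, hkd, hky⟩ := SameCycle.mem_of_mapsTo hS h ⟨d, hd0, le_rfl, hdx⟩
  exact hne_y k hk hkd hky

theorem sameCycle_mul_swap_iff (hxy : x ≠ y) :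
    (σ * swap x y).SameCycle x y ↔ ¬σ.SameCycle x y :=
  ⟨fun h hs => not_sameCycle_mul_swap_of_sameCycle hxy hs h,
    sameCycle_mul_swap_of_not_sameCycle⟩

theorem SameCycle.of_mul_swap {u v : α} (h : (σ * swap x y).SameCycle u v) :
    σ.SameCycle u v ∨ ((σ.SameCycle u x ∨ σ.SameCycle u y) ∧
      (σ.SameCycle v x ∨ σ.SameCycle v y)) := by
  set A : α → Prop := fun w => σ.SameCycle w x ∨ σ.SameCycle w y
  have hA : ∀ w, A (σ w) ↔ A w := by simp [A, sameCycle_apply_left]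
  refine SameCycle.mem_of_mapsTo (s := {w | σ.SameCycle u w ∨ (A u ∧ A w)}) ?_ h
    (Or.inl SameCycle.rfl)
  intro w hw
  by_cases hwx : w = x
  · subst hwx
    refine Or.inr ⟨hw.elim Or.inl And.left, ?_⟩
    simpa [hA] using Or.inr SameCycle.rfl
  by_cases hwy : w = y
  · subst hwy
    refine Or.inr ⟨hw.elim Or.inr And.left, ?_⟩
    simpa [hA] using Or.inl SameCycle.rfl
  rw [mul_apply, swap_apply_of_ne_of_ne hwx hwy]
  exact hw.imp sameCycle_apply_right.2 (And.imp_right (hA w).2)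

theorem SameCycle.mul_swap_of_not_sameCycle (hn : ¬σ.SameCycle x y) {u v : α}
    (h : σ.SameCycle u v) : (σ * swap x y).SameCycle u v := by
  have hxy := sameCycle_mul_swap_of_not_sameCycle hn
  have hstep : ∀ w, (σ * swap x y).SameCycle w (σ w) := by
    intro w
    by_cases hwx : w = x
    · subst hwx
      exact hxy.trans ⟨1, by simp⟩
    by_cases hwy : w = y
    · subst hwy
      exact hxy.symm.trans ⟨1, by simp⟩
    exact ⟨1, by simp [swap_apply_of_ne_of_ne hwx hwy]⟩
  exact SameCycle.mem_of_mapsTo (s := {w | (σ * swap x y).SameCycle u w})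
    (fun w hw => hw.trans (hstep w)) h SameCycle.rfl

theorem numCycles_mul_swap_add_one (hn : ¬σ.SameCycle x y) :
    numCycles (σ * swap x y) + 1 = numCycles σ := by
  set τ := σ * swap x y
  let φ : {p : Quotient (SameCycle.setoid σ) // p ≠ Quotient.mk _ y} →
      Quotient (SameCycle.setoid τ) :=
    fun p => Quotient.map id (fun _ _ => SameCycle.mul_swap_of_not_sameCycle hn) p.1
  -- the cycles of `σ * swap x y` are those of `σ`, with the cycles of `x` and `y` merged
  have hφ : Function.Bijective φ := by
    constructor
    · rintro ⟨⟨u⟩, hu⟩ ⟨⟨v⟩, hv⟩ huv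
      have hu : ¬σ.SameCycle u y := fun h => hu (Quotient.sound h)
      have hv : ¬σ.SameCycle v y := fun h => hv (Quotient.sound h)
      refine Subtype.ext (Quotient.sound ?_)
      rcases (Quotient.exact huv : τ.SameCycle u v).of_mul_swap with h | ⟨hu', hv'⟩
      · exact h
      · exact (hu'.resolve_right hu).trans (hv'.resolve_right hv).symm
    · rintro ⟨u⟩
      by_cases hu : σ.SameCycle u y
      · refine ⟨⟨Quotient.mk _ x, fun h => hn (Quotient.exact h)⟩, Quotient.sound ?_⟩
        exact (sameCycle_mul_swap_of_not_sameCycle hn).trans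
          (SameCycle.mul_swap_of_not_sameCycle hn hu).symm
      · exact ⟨⟨Quotient.mk _ u, fun h => hu (Quotient.exact h)⟩, rfl⟩
  classical
  rw [numCycles, numCycles, ← Nat.card_congr (Equiv.ofBijective φ hφ),
    ← Finite.card_option, Nat.card_congr (Equiv.optionSubtypeNe _)]

theorem numCycles_mul_swap_of_sameCycle (hxy : x ≠ y) (hs : σ.SameCycle x y) :
    numCycles (σ * swap x y) = numCycles σ + 1 := by
  have := numCycles_mul_swap_add_one (not_sameCycle_mul_swap_of_sameCycle hxy hs)
  rwa [mul_swap_mul_self, eq_comm] at this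

theorem numCycles_le_mul_prod_add_length {L : List (Perm α)} (hL : ∀ t ∈ L, t.IsSwap)
    (σ : Perm α) : numCycles σ ≤ numCycles (σ * L.prod) + L.length := by
  induction L generalizing σ with
  | nil => simp
  | cons t L ih =>
    obtain ⟨a, b, hab, rfl⟩ := hL t List.mem_cons_self
    have hσ : numCycles σ ≤ numCycles (σ * swap a b) + 1 := by
      by_cases hs : σ.SameCycle a b
      · rw [numCycles_mul_swap_of_sameCycle hab hs]; omega
      · rw [← numCycles_mul_swap_add_one hs]
    have := ih (fun t ht => hL t (List.mem_cons_of_mem _ ht)) (σ * swap a b)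
    rw [List.prod_cons, ← mul_assoc, List.length_cons]
    omega

theorem exists_isSwap_prod_eq_length_add_numCycles (σ : Perm α) :
    ∃ L : List (Perm α), (∀ t ∈ L, t.IsSwap) ∧ L.prod = σ ∧
      L.length + numCycles σ = Nat.card α := by
  by_cases hσ : σ = 1
  · exact ⟨[], by simp, by simp [hσ], by simp [hσ, numCycles_one]⟩
  obtain ⟨z, hz⟩ : ∃ z, σ z ≠ z := by
    by_contra! h
    exact hσ (Equiv.ext h)
  have hsplit := numCycles_mul_swap_of_sameCycle (Ne.symm hz) (⟨1, rfl⟩ : σ.SameCycle z (σ z))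
  obtain ⟨L, hL, hprod, hlen⟩ := exists_isSwap_prod_eq_length_add_numCycles (σ * swap z (σ z))
  refine ⟨L ++ [swap z (σ z)], ?_, ?_, ?_⟩
  · simpa [or_imp, forall_and] using ⟨hL, ⟨z, σ z, Ne.symm hz, rfl⟩⟩
  · rw [List.prod_append, hprod, List.prod_singleton, mul_swap_mul_self]
  · rw [List.length_append, List.length_singleton]
    omega
termination_by Nat.card α - numCycles σ
decreasing_by have := numCycles_le_card (σ * swap z (σ z)); omega

end Finite

end Equiv.Perm

open Equiv Perm

theorem permNorm_add_numCycles {α : Type*} [DecidableEq α] [Finite α] (σ : Perm α) :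
    permNorm σ + numCycles σ = Nat.card α := by
  obtain ⟨L, hL, hprod, hlen⟩ := exists_isSwap_prod_eq_length_add_numCycles σ
  have hle : permNorm σ ≤ L.length := Nat.sInf_le ⟨L, rfl, hL, hprod⟩
  obtain ⟨L', hlen', hL', hprod'⟩ := Nat.sInf_mem (s := {k | ∃ l : List (Perm α),
    l.length = k ∧ (∀ t ∈ l, t.IsSwap) ∧ l.prod = σ}) ⟨_, L, rfl, hL, hprod⟩
  change L'.length = permNorm σ at hlen'
  have hge := numCycles_le_mul_prod_add_length hL' 1
  rw [one_mul, hprod', numCycles_one] at hge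
  omega

section MinimalFactorization

variable {α : Type*} [DecidableEq α] [Finite α] {L₁ L₂ : List (Perm α)} {x y : α}

theorem not_sameCycle_prefix_of_length_eq_permNorm (h₁ : ∀ t ∈ L₁, t.IsSwap)
    (h₂ : ∀ t ∈ L₂, t.IsSwap) (hxy : x ≠ y)
    (hmin : L₁.length + L₂.length + 1 = permNorm (L₁.prod * swap x y * L₂.prod)) :
    ¬L₁.prod.SameCycle x y := by
  intro hs
  have hprefix := numCycles_le_mul_prod_add_length h₁ 1
  have hsuffix := numCycles_le_mul_prod_add_length h₂ (L₁.prod * swap x y)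
  have hsplit := numCycles_mul_swap_of_sameCycle hxy hs
  have hnorm := permNorm_add_numCycles (L₁.prod * swap x y * L₂.prod)
  rw [one_mul, numCycles_one] at hprefix
  omega

theorem sameCycle_prod_of_length_eq_permNorm (h₁ : ∀ t ∈ L₁, t.IsSwap)
    (h₂ : ∀ t ∈ L₂, t.IsSwap) (hxy : x ≠ y)
    (hmin : L₁.length + L₂.length + 1 = permNorm (L₁.prod * swap x y * L₂.prod)) :
    (L₁.prod * swap x y * L₂.prod).SameCycle x y := by
  set L₂' := L₂.map (MulAut.conj (swap x y))
  -- conjugating the suffix by `swap x y` moves that factor to the end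
  have hprod : (L₁ ++ L₂').prod = L₁.prod * swap x y * L₂.prod * swap x y := by
    simp [L₂', ← map_list_prod, mul_assoc]
  have h₁' : ∀ t ∈ L₁ ++ L₂', t.IsSwap := by
    simp only [List.mem_append, List.mem_map, L₂']
    rintro t (ht | ⟨t, ht, rfl⟩)
    exacts [h₁ t ht, (h₂ t ht).conj _]
  have := not_sameCycle_prefix_of_length_eq_permNorm (L₂ := []) h₁' (by simp) hxy
    (by simpa [hprod, L₂', add_right_comm] using hmin)
  rwa [hprod, sameCycle_mul_swap_iff hxy, not_not] at this

end MinimalFactorization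

/-- Let `π ∈ S_L` with `‖π‖ = k` and let `t₁t₂⋯t_k` be a product of transpositions
equal to `π`. Then for every `j`, the two elements swapped by `t_j` lie in two
different cycles of the partial product `t₁⋯t_{j−1}`, and lie in the same cycle
of `π`. -/
theorem swap_factors_mix_cycles {α : Type*} [Fintype α] [DecidableEq α]
    (π : Equiv.Perm α) (l : List (Equiv.Perm α))
    (hswap : ∀ t ∈ l, t.IsSwap) (hprod : l.prod = π) (hlen : l.length = permNorm π)
    (j : ℕ) (hj : j < l.length) (x y : α) (hxy : x ≠ y)
    (hget : l.get ⟨j, hj⟩ = Equiv.swap x y) :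
    ¬ ((l.take j).prod).SameCycle x y ∧ π.SameCycle x y := by
  have hl : l = l.take j ++ swap x y :: l.drop (j + 1) := by
    rw [← hget, List.get_eq_getElem, List.getElem_cons_drop, List.take_append_drop]
  have h₁ : ∀ t ∈ l.take j, t.IsSwap := fun t ht => hswap t (List.mem_of_mem_take ht)
  have h₂ : ∀ t ∈ l.drop (j + 1), t.IsSwap := fun t ht => hswap t (List.mem_of_mem_drop ht)
  have hπ : π = (l.take j).prod * swap x y * (l.drop (j + 1)).prod := by
    rw [← hprod, mul_assoc, ← List.prod_cons, ← List.prod_append, ← hl]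
  have hmin : (l.take j).length + (l.drop (j + 1)).length + 1 = permNorm π := by
    simp only [List.length_take, List.length_drop, ← hlen]
    omega
  rw [hπ] at hmin ⊢
  exact ⟨not_sameCycle_prefix_of_length_eq_permNorm h₁ h₂ hxy hmin,
    sameCycle_prod_of_length_eq_permNorm h₁ h₂ hxy hmin⟩
end

section
/- Let F₄ be free on a₁, b₁, a₂, b₂ and δ₂ = [a₁,b₁][a₂,b₂]. The endomorphism of F₄ given by a₁ ↦ a₁a₂a₁a₂⁻¹a₁⁻¹, b₁ ↦ a₁a₂a₁⁻¹a₂⁻¹b₁a₁²a₂⁻¹a₁⁻¹, a₂ ↦ a₁a₂a₁⁻¹, b₂ ↦ b₂a₂a₁⁻¹ is an automorphism fixing δ₂. -/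
/-!
The map is inverted by the substitution
`a₁ ↦ a₂⁻¹a₁a₂`, `b₁ ↦ a₂⁻¹a₁⁻¹a₂a₁b₁a₁⁻¹a₂`, `a₂ ↦ a₂⁻¹a₁⁻¹a₂a₁a₂`, `b₂ ↦ b₂a₂⁻²a₁a₂`:
both composites fix every generator after free reduction, and so does the image of `δ₂`.
Each of these is an identity between words, so it is checked in an arbitrary group and then
specialised to the generators of `F₄`.
-/

open scoped commutatorElement

namespace ExplicitAutF4

variable {G H : Type*} [Group G] [Group H]

/-- The generators are indexed as `x = ![a₁, b₁, a₂, b₂]`. -/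
def images (x : Fin 4 → G) : Fin 4 → G :=
  ![x 0 * x 2 * x 0 * (x 2)⁻¹ * (x 0)⁻¹,
    x 0 * x 2 * (x 0)⁻¹ * (x 2)⁻¹ * x 1 * x 0 * x 0 * (x 2)⁻¹ * (x 0)⁻¹,
    x 0 * x 2 * (x 0)⁻¹,
    x 3 * x 2 * (x 0)⁻¹]

def invImages (x : Fin 4 → G) : Fin 4 → G :=
  ![(x 2)⁻¹ * x 0 * x 2,
    (x 2)⁻¹ * (x 0)⁻¹ * x 2 * x 0 * x 1 * (x 0)⁻¹ * x 2,
    (x 2)⁻¹ * (x 0)⁻¹ * x 2 * x 0 * x 2,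
    x 3 * (x 2)⁻¹ * (x 2)⁻¹ * x 0 * x 2]

theorem map_comp_images (f : G →* H) (x : Fin 4 → G) : f ∘ images x = images (f ∘ x) := by
  funext i; fin_cases i <;> simp [images]

theorem map_comp_invImages (f : G →* H) (x : Fin 4 → G) :
    f ∘ invImages x = invImages (f ∘ x) := by
  funext i; fin_cases i <;> simp [invImages]

theorem images_invImages (x : Fin 4 → G) : images (invImages x) = x := by
  funext i
  fin_cases i <;>
    simp only [images, invImages, Matrix.cons_val, Matrix.cons_val_zero, Matrix.cons_val_one,
      Fin.isValue, Fin.zero_eta, Fin.mk_one, Fin.reduceFinMk] <;> group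

theorem invImages_images (x : Fin 4 → G) : invImages (images x) = x := by
  funext i
  fin_cases i <;>
    simp only [images, invImages, Matrix.cons_val, Matrix.cons_val_zero, Matrix.cons_val_one,
      Fin.isValue, Fin.zero_eta, Fin.mk_one, Fin.reduceFinMk] <;> group

theorem commutator_mul_commutator_images (x : Fin 4 → G) :
    ⁅images x 0, images x 1⁆ * ⁅images x 2, images x 3⁆ = ⁅x 0, x 1⁆ * ⁅x 2, x 3⁆ := by
  simp only [images, commutatorElement_def, Matrix.cons_val, Matrix.cons_val_zero,
    Matrix.cons_val_one, Fin.isValue]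
  group

theorem comp_lift {α : Type*} (g : G →* H) (u : α → G) :
    g.comp (FreeGroup.lift u) = FreeGroup.lift (g ∘ u) :=
  FreeGroup.ext_hom _ _ fun _ => by simp

end ExplicitAutF4

/-- Let `F₄` be free on `a₁, b₁, a₂, b₂` (generators `0, 1, 2, 3`) and
`δ₂ = [a₁,b₁][a₂,b₂]`. The endomorphism of `F₄` given by
`a₁ ↦ a₁a₂a₁a₂⁻¹a₁⁻¹`, `b₁ ↦ a₁a₂a₁⁻¹a₂⁻¹b₁a₁²a₂⁻¹a₁⁻¹`, `a₂ ↦ a₁a₂a₁⁻¹`,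
`b₂ ↦ b₂a₂a₁⁻¹` is an automorphism fixing `δ₂`. -/
theorem explicit_aut_F4_fixes_delta2 :
    ∀ a b c d : FreeGroup (Fin 4),
      a = FreeGroup.of 0 → b = FreeGroup.of 1 → c = FreeGroup.of 2 → d = FreeGroup.of 3 →
      Function.Bijective
          (FreeGroup.lift ![a * c * a * c⁻¹ * a⁻¹,
            a * c * a⁻¹ * c⁻¹ * b * a * a * c⁻¹ * a⁻¹, a * c * a⁻¹, d * c * a⁻¹] :
            FreeGroup (Fin 4) → FreeGroup (Fin 4)) ∧
        FreeGroup.lift ![a * c * a * c⁻¹ * a⁻¹,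
            a * c * a⁻¹ * c⁻¹ * b * a * a * c⁻¹ * a⁻¹, a * c * a⁻¹, d * c * a⁻¹]
          (⁅a, b⁆ * ⁅c, d⁆) = ⁅a, b⁆ * ⁅c, d⁆ := by
  open ExplicitAutF4 FreeGroup in
  rintro _ _ _ _ rfl rfl rfl rfl
  set φ : FreeGroup (Fin 4) →* FreeGroup (Fin 4) := lift (images of)
  set ψ : FreeGroup (Fin 4) →* FreeGroup (Fin 4) := lift (invImages of)
  have hψ : ⇑ψ ∘ of = invImages of := funext fun _ => lift_apply_of
  have hφ : ⇑φ ∘ of = images of := funext fun _ => lift_apply_of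
  have hψφ : ψ.comp φ = MonoidHom.id _ := by
    rw [comp_lift, map_comp_images, hψ, images_invImages, lift_of_eq_id]
  have hφψ : φ.comp ψ = MonoidHom.id _ := by
    rw [comp_lift, map_comp_invImages, hφ, invImages_images, lift_of_eq_id]
  refine ⟨(MonoidHom.toMulEquiv φ ψ hψφ hφψ).bijective, ?_⟩
  change φ _ = _
  simp only [_root_.map_mul, map_commutatorElement, φ, lift_apply_of]
  exact commutator_mul_commutator_images of
end

section
/- Let a group G act on a locally finite graded poset P by order-preserving, rank-preserving bijections, and suppose that whenever x₀ < x₁ < ⋯ < x_k in P and g₀.x₀ < g₁.x₁ < ⋯ < g_k.x_k for some g₀,...,g_k ∈ G, there exists g ∈ G with g.x_i = g_i.x_i for all i. Then the geometric realization of the order complex of the quotient poset P/G is homeomorphic to the topological quotient of the geometric realization |P| by the G-action. -/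
open CategoryTheory

/-- The geometric realization of the order complex of a poset (realized as the
geometric realization of the nerve of the poset viewed as a category). -/
noncomputable def realiz (X : Type) [Preorder X] : TopCat :=
  SSet.toTop.obj (nerveFunctor.obj (Cat.of X))

/-- The continuous map on geometric realizations induced by an order-preserving map. -/
noncomputable def realizMap {X Y : Type} [Preorder X] [Preorder Y] {f : X → Y}
    (hf : Monotone f) : realiz X ⟶ realiz Y :=
  SSet.toTop.map (nerveFunctor.map (X := Cat.of X) (Y := Cat.of Y) hf.functor.toCatHom)

open Limits

/-! The nerve of `P/G` is, simplexwise, the orbit set of the nerve of `P`. Every chain of `P/G`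
lifts to a chain of `P`, one vertex at a time. Two chains of `P` with the same image are
`G`-translates of each other: an orbit meets a chain at most once (the action preserves rank),
so both chains repeat vertices at the same places, and after deleting repetitions this is the
regularity hypothesis. Hence `N(P/G)` is the colimit of the `G`-diagram `N(P)`. Geometric
realization is a left adjoint, so `|P/G|` is the colimit of the `G`-diagram `|P|`, which is the
orbit space `|P|/G`. -/

section OrbitChains

variable {G P : Type*} [SMul G P] [PartialOrder P]

theorem eq_of_le_of_smul_eq (rk : P → ℕ) (hrk_lt : ∀ x y : P, x < y → rk x < rk y)
    (hG_rk : ∀ (g : G) (x : P), rk (g • x) = rk x) {x y : P} {g : G} (hxy : x ≤ y)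
    (hg : g • x = y) : x = y := by
  refine hxy.eq_of_not_lt fun hlt => (hrk_lt x y hlt).ne ?_
  rw [← hg, hG_rk]

theorem exists_smul_eq_of_strictMono
    (hreg : ∀ (k : ℕ) (x : Fin (k + 1) → P) (g : Fin (k + 1) → G), StrictMono x →
      StrictMono (fun i => g i • x i) → ∃ g₀ : G, ∀ i, g₀ • x i = g i • x i)
    {m : ℕ} {x y : Fin (m + 1) → P} (hx : StrictMono x) (hy : Monotone y)
    (horb : ∀ i, ∃ g : G, g • x i = y i) (hxy : ∀ i j, y i = y j → x i = x j) :
    ∃ g₀ : G, ∀ i, g₀ • x i = y i := by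
  choose g hg using horb
  have hy' : StrictMono y := hy.strictMono_of_injective fun i j h => hx.injective (hxy i j h)
  obtain ⟨g₀, hg₀⟩ := hreg m x g hx (by simpa only [hg] using hy')
  exact ⟨g₀, fun i => (hg₀ i).trans (hg i)⟩

theorem exists_smul_eq_of_monotone
    (hreg : ∀ (k : ℕ) (x : Fin (k + 1) → P) (g : Fin (k + 1) → G), StrictMono x →
      StrictMono (fun i => g i • x i) → ∃ g₀ : G, ∀ i, g₀ • x i = g i • x i)
    {m : ℕ} {x y : Fin (m + 1) → P} (hx : Monotone x) (hy : Monotone y)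
    (horb : ∀ i, ∃ g : G, g • x i = y i) (hxy : ∀ i j, x i = x j ↔ y i = y j) :
    ∃ g₀ : G, ∀ i, g₀ • x i = y i := by
  induction m with
  | zero =>
    exact exists_smul_eq_of_strictMono hreg (Fin.strictMono_iff_lt_succ.2 fun i => i.elim0) hy
      horb fun i j => (hxy i j).2
  | succ m ih =>
    by_cases hrep : ∃ i : Fin (m + 1), x i.castSucc = x i.succ
    swap
    · refine exists_smul_eq_of_strictMono hreg (Fin.strictMono_iff_lt_succ.2 fun i => ?_) hy
        horb fun i j => (hxy i j).2
      exact (Fin.monotone_iff_le_succ.1 hx i).lt_of_ne fun h => hrep ⟨i, h⟩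
    obtain ⟨i, hi⟩ := hrep
    -- drop the repeated vertex `x i.succ`; it is moved like its equal neighbour `x i.castSucc`
    have hsucc : Monotone i.succ.succAbove := (Fin.strictMono_succAbove _).monotone
    obtain ⟨g₀, hg₀⟩ := ih (x := x ∘ i.succ.succAbove) (y := y ∘ i.succ.succAbove)
      (hx.comp hsucc) (hy.comp hsucc) (fun _ => horb _) (fun _ _ => hxy _ _)
    refine ⟨g₀, fun j => ?_⟩
    rcases eq_or_ne j i.succ with rfl | hj
    · have h := hg₀ i
      simp only [Function.comp_apply, Fin.succAbove_succ_self] at h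
      rw [← hi, h, (hxy _ _).1 hi]
    · obtain ⟨j', rfl⟩ := Fin.exists_succAbove_eq hj
      exact hg₀ j'

end OrbitChains

theorem exists_monotone_lift {P Q : Type*} [Preorder P] [Preorder Q] {π : P → Q}
    (hsurj : Function.Surjective π) (hlift : ∀ x b, π x ≤ b → ∃ y, x ≤ y ∧ π y = b)
    {n : ℕ} {c : Fin (n + 1) → Q} (hc : Monotone c) : ∃ d, Monotone d ∧ π ∘ d = c := by
  induction n with
  | zero =>
    obtain ⟨x, hx⟩ := hsurj (c 0)
    exact ⟨fun _ => x, monotone_const, funext fun i => by rw [Fin.fin_one_eq_zero i]; exact hx⟩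
  | succ n ih =>
    obtain ⟨d, hd, hdc⟩ := ih (hc.comp Fin.strictMono_castSucc.monotone)
    obtain ⟨y, hy, hyc⟩ := hlift (d (Fin.last n)) (c (Fin.last (n + 1)))
      (by rw [← Function.comp_apply (f := π), hdc]; exact hc (Fin.castSucc_lt_last _).le)
    refine ⟨Fin.snoc d y, Fin.monotone_iff_le_succ.2 fun i => ?_, ?_⟩
    · induction i using Fin.lastCases with
      | last => simpa using hy
      | cast i =>
        rw [Fin.succ_castSucc, Fin.snoc_castSucc, Fin.snoc_castSucc]
        exact Fin.monotone_iff_le_succ.1 hd i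
    · rw [Fin.comp_snoc, hdc, hyc]
      exact Fin.snoc_init_self c

section QuotientPoset

variable {G P Q : Type*} [SMul G P] [PartialOrder P] {π : P → Q}

theorem exists_le_and_eq_of_le [Preorder Q] (hπ_fib : ∀ x y : P, π x = π y ↔ ∃ g : G, g • x = y)
    (hG_mono : ∀ g : G, Monotone (fun x : P => g • x))
    (hπ_le : ∀ a b : Q, a ≤ b ↔ ∃ x y : P, π x = a ∧ π y = b ∧ x ≤ y)
    {x : P} {b : Q} (hxb : π x ≤ b) : ∃ y, x ≤ y ∧ π y = b := by
  obtain ⟨x', y, hx', rfl, hle⟩ := (hπ_le _ _).1 hxb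
  obtain ⟨g, rfl⟩ := (hπ_fib x' x).1 hx'
  exact ⟨g • y, hG_mono g hle, ((hπ_fib y _).2 ⟨g, rfl⟩).symm⟩

theorem exists_smul_eq_of_map_eq (hπ_fib : ∀ x y : P, π x = π y ↔ ∃ g : G, g • x = y)
    (rk : P → ℕ) (hrk_lt : ∀ x y : P, x < y → rk x < rk y)
    (hG_rk : ∀ (g : G) (x : P), rk (g • x) = rk x)
    (hreg : ∀ (k : ℕ) (x : Fin (k + 1) → P) (g : Fin (k + 1) → G), StrictMono x →
      StrictMono (fun i => g i • x i) → ∃ g₀ : G, ∀ i, g₀ • x i = g i • x i)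
    {m : ℕ} {d d' : Fin (m + 1) → P} (hd : Monotone d) (hd' : Monotone d')
    (h : ∀ i, π (d i) = π (d' i)) : ∃ g : G, ∀ i, g • d i = d' i := by
  have hinj : ∀ x y, x ≤ y → π x = π y → x = y := fun x y hxy hπxy => by
    obtain ⟨g, hg⟩ := (hπ_fib x y).1 hπxy
    exact eq_of_le_of_smul_eq rk hrk_lt hG_rk hxy hg
  have hrep : ∀ {e e' : Fin (m + 1) → P}, Monotone e' → (∀ i, π (e i) = π (e' i)) →
      ∀ i j, e i = e j → e' i = e' j := by
    intro e e' he' hee' i j hij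
    have hπij : π (e' i) = π (e' j) := by rw [← hee', hij, hee']
    rcases le_total i j with hle | hle
    · exact hinj _ _ (he' hle) hπij
    · exact (hinj _ _ (he' hle) hπij.symm).symm
  exact exists_smul_eq_of_monotone hreg hd hd' (fun i => (hπ_fib _ _).1 (h i))
    fun i j => ⟨hrep hd' h i j, hrep hd (fun i => (h i).symm) i j⟩

end QuotientPoset

theorem Monotone.functor_congr {X Y : Type*} [Preorder X] [Preorder Y] {f g : X → Y}
    (hf : Monotone f) (hg : Monotone g) (h : f = g) : hf.functor = hg.functor := by
  subst h; rfl

theorem CategoryTheory.Limits.SingleObj.Types.nonempty_isColimit_of_surjective {M : Type*}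
    [Monoid M] {F : SingleObj M ⥤ Type*} (c : Cocone F)
    (hsurj : Function.Surjective (c.ι.app (SingleObj.star M)))
    (hfib : ∀ x y, c.ι.app (SingleObj.star M) x = c.ι.app (SingleObj.star M) y →
      ∃ g : M, F.map g x = y) :
    Nonempty (IsColimit c) := by
  rw [Types.isColimit_iff_coconeTypesIsColimit]
  refine ⟨⟨?_, (Functor.CoconeTypes.descColimitType_surjective_iff _).2 fun z => ⟨_, hsurj z⟩⟩⟩
  rintro ⟨⟨⟨⟩, x⟩⟩ ⟨⟨⟨⟩, y⟩⟩ h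
  obtain ⟨g, hg⟩ := hfib x y h
  exact Quot.sound ⟨g, hg.symm⟩

def TopCat.singleObjQuotCocone {M : Type*} [Monoid M] (F : SingleObj M ⥤ TopCat) : Cocone F where
  pt := TopCat.of (Quot fun a b : F.obj (SingleObj.star M) => ∃ g : M, F.map g a = b)
  ι :=
    { app _ := TopCat.ofHom ⟨Quot.mk _, continuous_quot_mk⟩
      naturality _ _ g := by
        ext a
        exact (Quot.sound ⟨g, rfl⟩).symm }

def TopCat.isColimitSingleObjQuotCocone {M : Type*} [Monoid M] (F : SingleObj M ⥤ TopCat) :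
    IsColimit (TopCat.singleObjQuotCocone F) where
  desc s := TopCat.ofHom
    ⟨Quot.lift (s.ι.app (SingleObj.star M)) (by
      rintro a b ⟨g, rfl⟩
      exact (ConcreteCategory.congr_hom (s.w g) a).symm),
      continuous_quot_lift _ (s.ι.app _).hom.continuous⟩
  fac _ _ := rfl
  uniq s f w := by
    ext x
    induction x using Quot.ind with
    | _ a => exact ConcreteCategory.congr_hom (w (SingleObj.star M)) a

section NerveQuotient

variable {G P Q : Type} [Monoid G] [MulAction G P] [Preorder P] [Preorder Q]
  (hG_mono : ∀ g : G, Monotone (fun x : P => g • x))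

noncomputable def actionNerveDiagram : SingleObj G ⥤ SSet where
  obj _ := nerveFunctor.obj (Cat.of P)
  map g := nerveFunctor.map (X := Cat.of P) (Y := Cat.of P) (hG_mono g).functor.toCatHom
  map_id _ := by
    rw [Monotone.functor_congr _ monotone_id (funext (one_smul G))]
    exact nerveFunctor.map_id (Cat.of P)
  map_comp g h := by
    rw [Monotone.functor_congr _ ((hG_mono h).comp (hG_mono g)) (funext (mul_smul h g))]
    exact nerveFunctor.map_comp (hG_mono g).functor.toCatHom (hG_mono h).functor.toCatHom

noncomputable def orbitNerveCocone {π : P → Q} (hπ_mono : Monotone π)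
    (hπ : ∀ (g : G) x, π (g • x) = π x) : Cocone (actionNerveDiagram hG_mono) where
  pt := nerveFunctor.obj (Cat.of Q)
  ι :=
    { app _ := nerveFunctor.map (X := Cat.of P) (Y := Cat.of Q) hπ_mono.functor.toCatHom
      naturality _ _ g := by
        show nerveFunctor.map _ ≫ nerveFunctor.map _ = nerveFunctor.map _ ≫ 𝟙 _
        rw [Category.comp_id, ← Functor.map_comp]
        exact congrArg (fun f => nerveFunctor.map (Functor.toCatHom f))
          (Monotone.functor_congr (hπ_mono.comp (hG_mono g)) hπ_mono (funext (hπ g))) }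

theorem nonempty_isColimit_orbitNerveCocone {π : P → Q} (hπ_mono : Monotone π)
    (hπ : ∀ (g : G) x, π (g • x) = π x)
    (hlift : ∀ (n : ℕ) (c : Fin (n + 1) → Q), Monotone c → ∃ d, Monotone d ∧ π ∘ d = c)
    (horbit : ∀ (n : ℕ) (d d' : Fin (n + 1) → P), Monotone d → Monotone d' →
      (∀ i, π (d i) = π (d' i)) → ∃ g : G, ∀ i, g • d i = d' i) :
    Nonempty (IsColimit (orbitNerveCocone hG_mono hπ_mono hπ)) := by
  refine ⟨evaluationJointlyReflectsColimits _ fun Δ =>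
    (SingleObj.Types.nonempty_isColimit_of_surjective _ ?_ ?_).some⟩
  · intro (c : ComposableArrows Q _)
    obtain ⟨d, hd, hdc⟩ := hlift _ c.obj c.monotone
    exact ⟨hd.functor, nerve.ext_of_isThin (C := Q) hdc⟩
  · intro (d : ComposableArrows P _) (d' : ComposableArrows P _) h
    obtain ⟨g, hg⟩ := horbit _ d.obj d'.obj d.monotone d'.monotone
      (congrFun (congrArg Functor.obj h))
    exact ⟨g, nerve.ext_of_isThin (C := P) (funext hg)⟩

end NerveQuotient

theorem realization_of_quotient_poset_general {P Q : Type} [PartialOrder P] [PartialOrder Q]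
    (G : Type) [Group G] [MulAction G P] (rk : P → ℕ)
    (hrk_lt : ∀ x y : P, x < y → rk x < rk y)
    (hG_mono : ∀ g : G, Monotone (fun x : P => g • x))
    (hG_rk : ∀ (g : G) (x : P), rk (g • x) = rk x)
    (hreg : ∀ (k : ℕ) (x : Fin (k + 1) → P) (g : Fin (k + 1) → G), StrictMono x →
      StrictMono (fun i => g i • x i) → ∃ g₀ : G, ∀ i, g₀ • x i = g i • x i)
    (π : P → Q) (hπ_mono : Monotone π) (hπ_surj : Function.Surjective π)
    (hπ_fib : ∀ x y : P, π x = π y ↔ ∃ g : G, g • x = y)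
    (hπ_le : ∀ a b : Q, a ≤ b ↔ ∃ x y : P, π x = a ∧ π y = b ∧ x ≤ y) :
    Nonempty
      ((Quot fun a b : realiz P => ∃ g : G, realizMap (hG_mono g) a = b) ≃ₜ realiz Q) := by
  have hπ_smul : ∀ (g : G) x, π (g • x) = π x := fun g x => ((hπ_fib x _).2 ⟨g, rfl⟩).symm
  obtain ⟨hN⟩ := nonempty_isColimit_orbitNerveCocone hG_mono hπ_mono hπ_smul
    (fun _ _ hc => exists_monotone_lift hπ_surj
      (fun _ _ => exists_le_and_eq_of_le hπ_fib hG_mono hπ_le) hc)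
    (fun _ _ _ hd hd' h => exists_smul_eq_of_map_eq hπ_fib rk hrk_lt hG_rk hreg hd hd' h)
  exact ⟨TopCat.homeoOfIso ((isColimitOfPreserves SSet.toTop hN).coconePointUniqueUpToIso
    (TopCat.isColimitSingleObjQuotCocone _)).symm⟩

/-- Let a group `G` act on a locally finite graded poset `P` (rank function `rk`) by
order-preserving, rank-preserving bijections, such that whenever `x₀ < ⋯ < x_k` and
`g₀.x₀ < ⋯ < g_k.x_k` are chains, some single `g ∈ G` satisfies `g.x_i = g_i.x_i` for
all `i`. Let `Q` be the quotient poset `P/G`, i.e., there is a surjective monotone map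
`π : P → Q` whose fibers are the `G`-orbits, with `a ≤ b` in `Q` iff some representatives
are comparable. Then the geometric realization of the order complex of `P/G` is
homeomorphic to the topological quotient of `|P|` by the induced `G`-action. -/
theorem realization_of_quotient_poset {P Q : Type} [PartialOrder P] [PartialOrder Q]
    (G : Type) [Group G] [MulAction G P] (rk : P → ℕ)
    (hlocfin : ∀ x y : P, (Set.Icc x y).Finite)
    (hrk_lt : ∀ x y : P, x < y → rk x < rk y)
    (hrk_cov : ∀ x y : P, x ⋖ y → rk y = rk x + 1)
    (hG_mono : ∀ g : G, Monotone (fun x : P => g • x))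
    (hG_rk : ∀ (g : G) (x : P), rk (g • x) = rk x)
    (hreg : ∀ (k : ℕ) (x : Fin (k + 1) → P) (g : Fin (k + 1) → G), StrictMono x →
      StrictMono (fun i => g i • x i) → ∃ g₀ : G, ∀ i, g₀ • x i = g i • x i)
    (π : P → Q) (hπ_mono : Monotone π) (hπ_surj : Function.Surjective π)
    (hπ_fib : ∀ x y : P, π x = π y ↔ ∃ g : G, g • x = y)
    (hπ_le : ∀ a b : Q, a ≤ b ↔ ∃ x y : P, π x = a ∧ π y = b ∧ x ≤ y) :
    Nonempty
      ((Quot fun a b : realiz P => ∃ g : G, realizMap (hG_mono g) a = b) ≃ₜ realiz Q) :=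
  realization_of_quotient_poset_general G rk hrk_lt hG_mono hG_rk hreg π hπ_mono hπ_surj hπ_fib
    hπ_le
end
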